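/- Let V ⊂ ℙⁿ be a hypersurface of degree d and p ∈ V. Then p is a flex point of V (i.e., μ_p(V) ≥ n+1) if and only if Z_p^n ≠ {p}, equivalently dim(Z_p^n) ≥ 1, where Z_p^n is the zero set in ℙⁿ of f_1(p,·),…,f_n(p,·). -/
import Mathlib


/-!
STATEMENT 6: For a hypersurface `V = Z(f) ⊂ ℙⁿ` (`f` squarefree homogeneous of degree
`d`) and `p ∈ V`: `p` is a flex point of `V` (i.e. `μ_p(V) ≥ n+1`) if and only if
`Z_p^n ≠ {p}`, where `Z_p^n` is the zero set of `f_1(p,·),…,f_n(p,·)`.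

Conventions are as in the surrounding statements: nonzero representatives in `K^{n+1}`,
order of contact via the `t`-adic valuation of `f(p+tq)` (value in `ℕ∞`), `μ_p(V)` the
supremum over lines through `p`, and `Z_p^n = {p}` expressed by `ZpkTrivial`.
-/

open MvPolynomial Polynomial
open scoped Classical

/-- The `k`-th directional Taylor coefficient `f_k(x,y)`, characterized by
`f(x + t y) = Σ_k f_k(x,y) t^k / k!`. -/
noncomputable def dirCoeff {K : Type} [CommRing K] {n : ℕ}
    (f : MvPolynomial (Fin (n + 1)) K) (k : ℕ) :
    MvPolynomial (Fin (n + 1) ⊕ Fin (n + 1)) K :=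
  (k.factorial : MvPolynomial (Fin (n + 1) ⊕ Fin (n + 1)) K) *
    (Polynomial.coeff
      (MvPolynomial.aeval
        (fun i => Polynomial.C (MvPolynomial.X (Sum.inl i)) +
          Polynomial.X * Polynomial.C (MvPolynomial.X (Sum.inr i))) f) k)

/-- The restriction of `f` to the line `t ↦ p + t q`. -/
noncomputable def linePoly {K : Type} [CommRing K] {n : ℕ}
    (f : MvPolynomial (Fin (n + 1)) K) (p q : Fin (n + 1) → K) : Polynomial K :=
  MvPolynomial.aeval (fun i => Polynomial.C (p i) + Polynomial.X * Polynomial.C (q i)) f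

lemma map_linePoly {K : Type} [CommRing K] {n : ℕ}
    (f : MvPolynomial (Fin (n + 1)) K) (p q : Fin (n + 1) → K) :
    Polynomial.map (MvPolynomial.eval (Sum.elim p q))
      (MvPolynomial.aeval
        (fun i => Polynomial.C (MvPolynomial.X (Sum.inl i)) +
          Polynomial.X * Polynomial.C (MvPolynomial.X (Sum.inr i))) f)
      = linePoly f p q := by
  induction f using MvPolynomial.induction_on with
  | C a => simp [linePoly]
  | add f g hf hg => simp only [map_add, Polynomial.map_add, linePoly] at *; rw [hf, hg]
  | mul_X f i hf =>
      simp only [map_mul, Polynomial.map_mul, linePoly, MvPolynomial.aeval_X] at *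
      rw [hf]
      simp

lemma eval_dirCoeff {K : Type} [CommRing K] {n : ℕ}
    (f : MvPolynomial (Fin (n + 1)) K) (k : ℕ) (p q : Fin (n + 1) → K) :
    MvPolynomial.eval (Sum.elim p q) (dirCoeff f k)
      = (k.factorial : K) * (linePoly f p q).coeff k := by
  rw [dirCoeff, map_mul, map_natCast]
  congr 1
  rw [← map_linePoly f p q, Polynomial.coeff_map]

lemma coeff_zero_linePoly {K : Type} [CommRing K] {n : ℕ}
    (f : MvPolynomial (Fin (n + 1)) K) (p q : Fin (n + 1) → K) :
    (linePoly f p q).coeff 0 = MvPolynomial.eval p f := by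
  induction f using MvPolynomial.induction_on with
  | C a => simp [linePoly]
  | add f g hf hg => simp only [map_add, Polynomial.coeff_add, linePoly] at *; rw [hf, hg]
  | mul_X f i hf =>
      simp only [map_mul, linePoly, MvPolynomial.aeval_X, MvPolynomial.eval_mul,
        MvPolynomial.eval_X] at *
      rw [Polynomial.mul_coeff_zero, hf]
      simp

/-- Order of contact at `p` of the line through `p` and `q` with `Z(f)`. -/
noncomputable def contactOrder {K : Type} [Field K] {n : ℕ}
    (f : MvPolynomial (Fin (n + 1)) K) (p q : Fin (n + 1) → K) : ℕ∞ :=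
  if linePoly f p q = 0 then ⊤ else ((linePoly f p q).rootMultiplicity 0 : ℕ∞)

/-- The order of osculation `μ_p(V)`: supremum of orders of contact over the lines
through `p` (represented by nonzero `q` not proportional to `p`). -/
noncomputable def oscOrder {K : Type} [Field K] {n : ℕ}
    (f : MvPolynomial (Fin (n + 1)) K) (p : Fin (n + 1) → K) : ℕ∞ :=
  ⨆ q : {q : Fin (n + 1) → K // q ≠ 0 ∧ ¬∃ c : K, q = c • p},
    contactOrder f p (q : Fin (n + 1) → K)

/-- The condition `Z_p^k = {p}`. -/
def ZpkTrivial {K : Type} [Field K] {n : ℕ}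
    (f : MvPolynomial (Fin (n + 1)) K) (p : Fin (n + 1) → K) (k : ℕ) : Prop :=
  ∀ q : Fin (n + 1) → K, q ≠ 0 →
    (∀ j, 1 ≤ j → j ≤ k → MvPolynomial.eval (Sum.elim p q) (dirCoeff f j) = 0) →
      ∃ c : K, q = c • p


theorem flex_iff_Zpn_nontrivial
    (K : Type) [Field K] [IsAlgClosed K] [CharZero K] (n d : ℕ) (hn : 1 ≤ n)
    (f : MvPolynomial (Fin (n + 1)) K) (hf : f.IsHomogeneous d) (hsf : Squarefree f)
    (p : Fin (n + 1) → K) (hp : p ≠ 0) (hpV : MvPolynomial.eval p f = 0) :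
    ((n + 1 : ℕ) : ℕ∞) ≤ oscOrder f p ↔ ¬ ZpkTrivial f p n := by
  constructor
  · intro h hZ
    have hex : ∃ q : {q : Fin (n + 1) → K // q ≠ 0 ∧ ¬∃ c : K, q = c • p},
        ¬ (contactOrder f p (q : Fin (n + 1) → K) ≤ (n : ℕ∞)) := by
      by_contra hall
      push_neg at hall
      have hle : oscOrder f p ≤ (n : ℕ∞) := iSup_le fun q => hall q
      have := le_trans h hle
      exact absurd (Nat.cast_le.mp this) (by omega)
    obtain ⟨q, hq⟩ := hex
    rw [not_le] at hq
    have hcq : ((n + 1 : ℕ) : ℕ∞) ≤ contactOrder f p (q : Fin (n + 1) → K) := by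
      push_cast
      exact Order.add_one_le_of_lt hq
    have hcoeff : ∀ j ≤ n, (linePoly f p (q : Fin (n + 1) → K)).coeff j = 0 := by
      intro j hj
      by_cases h0 : linePoly f p (q : Fin (n + 1) → K) = 0
      · simp [h0]
      · rw [contactOrder, if_neg h0] at hcq
        have hm : n + 1 ≤ (linePoly f p (q : Fin (n + 1) → K)).rootMultiplicity 0 := by
          exact_mod_cast hcq
        have hd : Polynomial.X ^ (n + 1) ∣ linePoly f p (q : Fin (n + 1) → K) := by
          have := (Polynomial.le_rootMultiplicity_iff h0).mp hm
          simpa using this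
        exact Polynomial.X_pow_dvd_iff.mp hd j (by omega)
    obtain ⟨c, hc⟩ := hZ q q.2.1 (fun j hj1 hjn => by
      rw [eval_dirCoeff, hcoeff j (by omega), mul_zero])
    exact q.2.2 ⟨c, hc⟩
  · intro hZ
    rw [ZpkTrivial] at hZ
    push_neg at hZ
    obtain ⟨q, hq0, hqj, hqc⟩ := hZ
    have hcoeff : ∀ j ≤ n, (linePoly f p q).coeff j = 0 := by
      intro j hj
      rcases Nat.eq_zero_or_pos j with rfl | hpos
      · rw [coeff_zero_linePoly, hpV]
      · have h1 := hqj j hpos hj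
        rw [eval_dirCoeff] at h1
        have hfac : (j.factorial : K) ≠ 0 := Nat.cast_ne_zero.mpr j.factorial_ne_zero
        exact (mul_eq_zero.mp h1).resolve_left hfac
    have hc : ((n + 1 : ℕ) : ℕ∞) ≤ contactOrder f p q := by
      by_cases h0 : linePoly f p q = 0
      · simp [contactOrder, h0]
      · rw [contactOrder, if_neg h0]
        have hd : Polynomial.X ^ (n + 1) ∣ linePoly f p q :=
          Polynomial.X_pow_dvd_iff.mpr (fun e he => hcoeff e (by omega))
        have := (Polynomial.le_rootMultiplicity_iff h0 (a := 0) (n := n + 1)).mpr (by simpa using hd)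
        exact_mod_cast this
    exact le_trans hc (le_iSup (fun q : {q : Fin (n + 1) → K // q ≠ 0 ∧ ¬∃ c : K, q = c • p} =>
      contactOrder f p (q : Fin (n + 1) → K)) ⟨q, hq0, fun ⟨c, hc⟩ => hqc c hc⟩)
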